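/- arXiv:2109.06331 — 5 statements merged into one kernel-verified Lean document; each statement's English description precedes it below -/
import Mathlib

section
/- Let n ≥ 2 and let R : ℂⁿ × ℂⁿ × ℂⁿ × ℂⁿ → ℂ be a curvature-type form. Suppose that R(X, X, Y, Y) = −R(Y, Y, X, X) for all linearly independent vectors X, Y ∈ ℂⁿ. Then R(X, Y, Y, X) = −R(Y, X, X, Y) for all linearly independent vectors X, Y ∈ ℂⁿ. -/
open scoped ComplexConjugate BigOperators

/-- A curvature-type form on `ℂⁿ`: ℂ-linear in the 1st and 3rd arguments and
conjugate-linear (additive, with `R(…, c•X, …) = conj c * R(…, X, …)`) in the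
2nd and 4th arguments. -/
structure CurvatureForm (n : ℕ) where
  R : EuclideanSpace ℂ (Fin n) → EuclideanSpace ℂ (Fin n) → EuclideanSpace ℂ (Fin n) →
      EuclideanSpace ℂ (Fin n) → ℂ
  add_fst : ∀ X X' Y Z W, R (X + X') Y Z W = R X Y Z W + R X' Y Z W
  smul_fst : ∀ (c : ℂ) (X Y Z W), R (c • X) Y Z W = c * R X Y Z W
  add_snd : ∀ X Y Y' Z W, R X (Y + Y') Z W = R X Y Z W + R X Y' Z W
  smul_snd : ∀ (c : ℂ) (X Y Z W), R X (c • Y) Z W = conj c * R X Y Z W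
  add_trd : ∀ X Y Z Z' W, R X Y (Z + Z') W = R X Y Z W + R X Y Z' W
  smul_trd : ∀ (c : ℂ) (X Y Z W), R X Y (c • Z) W = c * R X Y Z W
  add_fth : ∀ X Y Z W W', R X Y Z (W + W') = R X Y Z W + R X Y Z W'
  smul_fth : ∀ (c : ℂ) (X Y Z W), R X Y Z (c • W) = conj c * R X Y Z W

/-- If `X, Y` are linearly independent, so are `X + a•Y` and `X + b•Y` for `a ≠ b`. -/
lemma li_shift {n : ℕ} {X Y : EuclideanSpace ℂ (Fin n)}
    (h : LinearIndependent ℂ ![X, Y]) {a b : ℂ} (hab : a ≠ b) :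
    LinearIndependent ℂ ![X + a • Y, X + b • Y] := by
  rw [LinearIndependent.pair_iff] at h ⊢
  intro s t hst
  have h1 := h (s + t) (s * a + t * b) (by
    have : (s + t) • X + (s * a + t * b) • Y = s • (X + a • Y) + t • (X + b • Y) := by
      module
    rw [this, hst])
  have hs : s = 0 := by
    have h2 : s * (a - b) = 0 := by linear_combination h1.2 - b * h1.1
    rcases mul_eq_zero.1 h2 with hs | hd
    · exact hs
    · exact absurd (sub_eq_zero.1 hd) hab
  exact ⟨hs, by linear_combination h1.1 - hs⟩

/-- Polarization step of Theorem 2.3: if `R(X,X̄,Y,Ȳ) = -R(Y,Ȳ,X,X̄)` for all linearly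
independent `X, Y`, then `R(X,Ȳ,Y,X̄) = -R(Y,X̄,X,Ȳ)` for all linearly independent `X, Y`. -/
theorem stmt0 (n : ℕ) (hn : 2 ≤ n) (R : CurvatureForm n)
    (hanti : ∀ X Y : EuclideanSpace ℂ (Fin n), LinearIndependent ℂ ![X, Y] →
      R.R X X Y Y = - R.R Y Y X X) :
    ∀ X Y : EuclideanSpace ℂ (Fin n), LinearIndependent ℂ ![X, Y] →
      R.R X Y Y X = - R.R Y X X Y := by
  intro X Y h
  have key : ∀ a b : ℂ, a ≠ b →
      R.R (X + a • Y) (X + a • Y) (X + b • Y) (X + b • Y)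
      = - R.R (X + b • Y) (X + b • Y) (X + a • Y) (X + a • Y) :=
    fun a b hab => hanti _ _ (li_shift h hab)
  have H1 := key 1 2 (by norm_num [Complex.ext_iff])
  have H2 := key 1 (2*Complex.I) (by norm_num [Complex.ext_iff])
  have H3 := key 1 (-2) (by norm_num [Complex.ext_iff])
  have H4 := key 1 (-2*Complex.I) (by norm_num [Complex.ext_iff])
  have H5 := key Complex.I 2 (by norm_num [Complex.ext_iff])
  have H6 := key Complex.I (2*Complex.I) (by norm_num [Complex.ext_iff])
  have H7 := key Complex.I (-2) (by norm_num [Complex.ext_iff])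
  have H8 := key Complex.I (-2*Complex.I) (by norm_num [Complex.ext_iff])
  have H9 := key (-1) 2 (by norm_num [Complex.ext_iff])
  have H10 := key (-1) (2*Complex.I) (by norm_num [Complex.ext_iff])
  have H11 := key (-1) (-2) (by norm_num [Complex.ext_iff])
  have H12 := key (-1) (-2*Complex.I) (by norm_num [Complex.ext_iff])
  have H13 := key (-Complex.I) 2 (by norm_num [Complex.ext_iff])
  have H14 := key (-Complex.I) (2*Complex.I) (by norm_num [Complex.ext_iff])
  have H15 := key (-Complex.I) (-2) (by norm_num [Complex.ext_iff])
  have H16 := key (-Complex.I) (-2*Complex.I) (by norm_num [Complex.ext_iff])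
  simp only [R.add_fst, R.add_snd, R.add_trd, R.add_fth, R.smul_fst, R.smul_snd,
    R.smul_trd, R.smul_fth, map_one, map_ofNat, map_neg, map_mul, Complex.conj_I,
    one_smul] at H1 H2 H3 H4 H5 H6 H7 H8 H9 H10 H11 H12 H13 H14 H15 H16
  linear_combination (norm := (ring_nf; simp only [Complex.I_pow_four]; ring_nf)) ((1) * (2) / 64) * H1 + ((1) * ((2*Complex.I)) / 64) * H2 + ((1) * ((-2)) / 64) * H3 + ((1) * ((-2*Complex.I)) / 64) * H4 + (((-Complex.I)) * (2) / 64) * H5 + (((-Complex.I)) * ((2*Complex.I)) / 64) * H6 + (((-Complex.I)) * ((-2)) / 64) * H7 + (((-Complex.I)) * ((-2*Complex.I)) / 64) * H8 + (((-1)) * (2) / 64) * H9 + (((-1)) * ((2*Complex.I)) / 64) * H10 + (((-1)) * ((-2)) / 64) * H11 + (((-1)) * ((-2*Complex.I)) / 64) * H12 + ((Complex.I) * (2) / 64) * H13 + ((Complex.I) * ((2*Complex.I)) / 64) * H14 + ((Complex.I) * ((-2)) / 64) * H15 + ((Complex.I) * ((-2*Complex.I)) / 64) * H16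
end

section
/- Let n ≥ 1, let R : ℂⁿ × ℂⁿ × ℂⁿ × ℂⁿ → ℂ be a curvature-type form, let (e₁, …, eₙ) be an orthonormal basis of ℂⁿ, and let b₁, …, bₙ be nonnegative real numbers. Let S be the unit sphere of ℂⁿ with uniform probability measure σ, and for w ∈ S set v_b(w) := Σ_{i=1}^{n} b_i w_i e_i. Then ∫_S R( v_b(w), v_b(w), v_b(w), v_b(w) ) dσ(w) = (1/(n(n+1))) · Σ_{i,k=1}^{n} ( R(e_i, e_i, e_k, e_k) + R(e_i, e_k, e_k, e_i) ) b_i² b_k². -/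
open scoped ComplexConjugate BigOperators

open MeasureTheory

noncomputable instance (n : ℕ) : MeasurableSpace (EuclideanSpace ℂ (Fin n)) :=
  MeasurableSpace.comap WithLp.ofLp MeasurableSpace.pi
instance (n : ℕ) : BorelSpace (EuclideanSpace ℂ (Fin n)) :=
  PiLp.borelSpace (ι := Fin n) (X := fun _ => ℂ) 2

/-!
Expanding `R` in each argument turns the integral into
`∑ bᵢ b_j b_k b_l R(eᵢ,e_j,e_k,e_l) M_{ijkl}` with the fourth moments
`M_{ijkl} = ∫ wᵢ w̄_j w_k w̄_l dσ`. Multiplying one coordinate by `I` is unitary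
and rescales `M_{ijkl}` by a power of `I`, which is `≠ 1` unless `{i, k} = {j, l}`; so only
`M_{iikk} = M_{ikki}` survive. The Hadamard rotation of the `(a, b)`-plane gives
`M_{aaaa} = M_{bbbb} = 2 M_{aabb}`, and on the unit sphere `∑ M_{iikk} = ∫ ‖w‖⁴ dσ = 1`,
whence `M_{ijkl} = (δ_{ij} δ_{kl} + δ_{il} δ_{kj}) / (n (n + 1))`.
-/

namespace CurvatureForm

variable {n : ℕ} (R : CurvatureForm n) {ι : Type*} (s : Finset ι) (c : ι → ℂ)
  (v : ι → EuclideanSpace ℂ (Fin n))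

lemma sum_smul_fst (Y Z W : EuclideanSpace ℂ (Fin n)) :
    R.R (∑ i ∈ s, c i • v i) Y Z W = ∑ i ∈ s, c i * R.R (v i) Y Z W :=
  (map_sum (AddMonoidHom.mk' (R.R · Y Z W) fun X X' => R.add_fst X X' Y Z W)
    (fun i => c i • v i) s).trans
    (Finset.sum_congr rfl fun _ _ => R.smul_fst ..)

lemma sum_smul_snd (X Z W : EuclideanSpace ℂ (Fin n)) :
    R.R X (∑ i ∈ s, c i • v i) Z W = ∑ i ∈ s, conj (c i) * R.R X (v i) Z W :=
  (map_sum (AddMonoidHom.mk' (R.R X · Z W) fun Y Y' => R.add_snd X Y Y' Z W)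
    (fun i => c i • v i) s).trans
    (Finset.sum_congr rfl fun _ _ => R.smul_snd ..)

lemma sum_smul_trd (X Y W : EuclideanSpace ℂ (Fin n)) :
    R.R X Y (∑ i ∈ s, c i • v i) W = ∑ i ∈ s, c i * R.R X Y (v i) W :=
  (map_sum (AddMonoidHom.mk' (R.R X Y · W) fun Z Z' => R.add_trd X Y Z Z' W)
    (fun i => c i • v i) s).trans
    (Finset.sum_congr rfl fun _ _ => R.smul_trd ..)

lemma sum_smul_fth (X Y Z : EuclideanSpace ℂ (Fin n)) :
    R.R X Y Z (∑ i ∈ s, c i • v i) = ∑ i ∈ s, conj (c i) * R.R X Y Z (v i) :=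
  (map_sum (AddMonoidHom.mk' (R.R X Y Z ·) fun W W' => R.add_fth X Y Z W W')
    (fun i => c i • v i) s).trans
    (Finset.sum_congr rfl fun _ _ => R.smul_fth ..)

lemma apply_sum_smul :
    R.R (∑ i ∈ s, c i • v i) (∑ i ∈ s, c i • v i)
        (∑ i ∈ s, c i • v i) (∑ i ∈ s, c i • v i) =
      ∑ i ∈ s, ∑ j ∈ s, ∑ k ∈ s, ∑ l ∈ s,
        c i * conj (c j) * c k * conj (c l) * R.R (v i) (v j) (v k) (v l) := by
  simp_rw [sum_smul_fst, sum_smul_snd, sum_smul_trd, sum_smul_fth, Finset.mul_sum, mul_assoc]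

end CurvatureForm

section Unitaries

variable {ι : Type*} [Fintype ι]

noncomputable def diagonalUnitary (c : ι → unitary ℂ) :
    EuclideanSpace ℂ ι ≃ₗᵢ[ℂ] EuclideanSpace ℂ ι :=
  LinearIsometryEquiv.piLpCongrRight 2 fun i => Unitary.mulLeft ℂ ℂ (c i)

lemma diagonalUnitary_apply (c : ι → unitary ℂ) (w : EuclideanSpace ℂ ι) (i : ι) :
    diagonalUnitary c w i = c i * w i := rfl

variable [DecidableEq ι]

noncomputable def hadamardLinearMap (a b : ι) :
    EuclideanSpace ℂ ι →ₗ[ℂ] EuclideanSpace ℂ ι where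
  toFun w := WithLp.toLp 2 fun t =>
    if t = a then (√2 : ℂ)⁻¹ * (w a + w b)
    else if t = b then (√2 : ℂ)⁻¹ * (w a - w b) else w t
  map_add' x y := by
    ext t
    simp only [PiLp.add_apply]
    split_ifs <;> ring
  map_smul' m x := by
    ext t
    simp only [PiLp.smul_apply, smul_eq_mul, RingHom.id_apply]
    split_ifs <;> ring

lemma norm_hadamardLinearMap {a b : ι} (hab : a ≠ b) (w : EuclideanSpace ℂ ι) :
    ‖hadamardLinearMap a b w‖ = ‖w‖ := by
  have hsplit : ∀ f : ι → ℝ, ∑ t, f t = f a + f b + ∑ t ∈ {a, b}ᶜ, f t := fun f => by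
    rw [← Finset.sum_pair hab, Finset.sum_add_sum_compl]
  have hpair : ‖(√2 : ℂ)⁻¹ * (w a + w b)‖ ^ 2 + ‖(√2 : ℂ)⁻¹ * (w a - w b)‖ ^ 2
      = ‖w a‖ ^ 2 + ‖w b‖ ^ 2 := by
    rw [norm_mul, norm_mul, mul_pow, mul_pow, ← mul_add, parallelogram_law_with_norm ℝ,
      norm_inv, Complex.norm_real, Real.norm_of_nonneg (Real.sqrt_nonneg 2), inv_pow,
      Real.sq_sqrt zero_le_two]
    ring
  refine (pow_left_inj₀ (norm_nonneg _) (norm_nonneg _) two_ne_zero).1 ?_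
  rw [EuclideanSpace.norm_sq_eq, EuclideanSpace.norm_sq_eq, hsplit, hsplit]
  simp only [hadamardLinearMap, LinearMap.coe_mk, AddHom.coe_mk, if_pos, if_neg hab.symm]
  rw [hpair]
  congr 1
  refine Finset.sum_congr rfl fun t ht => ?_
  simp only [Finset.mem_compl, Finset.mem_insert, Finset.mem_singleton, not_or] at ht
  rw [if_neg ht.1, if_neg ht.2]

noncomputable def hadamard {a b : ι} (hab : a ≠ b) :
    EuclideanSpace ℂ ι ≃ₗᵢ[ℂ] EuclideanSpace ℂ ι :=
  LinearIsometry.toLinearIsometryEquiv ⟨hadamardLinearMap a b, norm_hadamardLinearMap hab⟩ rfl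

lemma hadamard_apply_left {a b : ι} (hab : a ≠ b) (w : EuclideanSpace ℂ ι) :
    hadamard hab w a = (√2 : ℂ)⁻¹ * (w a + w b) := if_pos rfl

end Unitaries

section Moments

variable {n : ℕ} {σ : Measure (EuclideanSpace ℂ (Fin n))}

def quartic (i j k l : Fin n) (w : EuclideanSpace ℂ (Fin n)) : ℂ :=
  w i * conj (w j) * (w k * conj (w l))

def UnitarilyInvariant (σ : Measure (EuclideanSpace ℂ (Fin n))) : Prop :=
  ∀ U : EuclideanSpace ℂ (Fin n) ≃ₗᵢ[ℂ] EuclideanSpace ℂ (Fin n), σ.map U = σ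

noncomputable def moment (σ : Measure (EuclideanSpace ℂ (Fin n))) (i j k l : Fin n) : ℂ :=
  ∫ w, quartic i j k l w ∂σ

lemma continuous_quartic (i j k l : Fin n) : Continuous (quartic i j k l) := by
  unfold quartic
  fun_prop

lemma norm_quartic_le (i j k l : Fin n) (w : EuclideanSpace ℂ (Fin n)) :
    ‖quartic i j k l w‖ ≤ ‖w‖ ^ 4 := by
  have h := fun t => PiLp.norm_apply_le w t
  simp only [quartic, norm_mul, RCLike.norm_conj]
  calc _ ≤ ‖w‖ * ‖w‖ * (‖w‖ * ‖w‖) := by gcongr <;> apply h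
    _ = ‖w‖ ^ 4 := by ring

lemma ae_norm_eq_one [IsProbabilityMeasure σ] (hsphere : σ (Metric.sphere 0 1) = 1) :
    ∀ᵐ w ∂σ, ‖w‖ = 1 := by
  have : σ (Metric.sphere 0 1)ᶜ = 0 := by
    rw [measure_compl Metric.isClosed_sphere.measurableSet (measure_ne_top σ _), hsphere,
      measure_univ, tsub_self]
  filter_upwards [measure_eq_zero_iff_ae_notMem.1 this] with w hw
  simpa using hw

lemma integrable_quartic [IsProbabilityMeasure σ] (hsphere : σ (Metric.sphere 0 1) = 1)
    (i j k l : Fin n) : Integrable (quartic i j k l) σ := by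
  refine Integrable.mono' (integrable_const 1)
    (continuous_quartic i j k l).aestronglyMeasurable ?_
  filter_upwards [ae_norm_eq_one hsphere] with w hw
  simpa [hw] using norm_quartic_le i j k l w

lemma integral_sum_quartic [IsProbabilityMeasure σ] (hsphere : σ (Metric.sphere 0 1) = 1)
    (s : Finset (Fin n)) (C : Fin n → Fin n → Fin n → Fin n → ℂ) :
    ∫ w, ∑ i ∈ s, ∑ j ∈ s, ∑ k ∈ s, ∑ l ∈ s, C i j k l * quartic i j k l w ∂σ =
      ∑ i ∈ s, ∑ j ∈ s, ∑ k ∈ s, ∑ l ∈ s, C i j k l * moment σ i j k l := by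
  have hint : ∀ i j k l, Integrable (fun w => C i j k l * quartic i j k l w) σ :=
    fun i j k l => (integrable_quartic hsphere i j k l).const_mul _
  rw [integral_finsetSum _ fun i _ => integrable_finsetSum _ fun j _ =>
    integrable_finsetSum _ fun k _ => integrable_finsetSum _ fun l _ => hint i j k l]
  refine Finset.sum_congr rfl fun i _ => ?_
  rw [integral_finsetSum _ fun j _ => integrable_finsetSum _ fun k _ =>
    integrable_finsetSum _ fun l _ => hint i j k l]
  refine Finset.sum_congr rfl fun j _ => ?_
  rw [integral_finsetSum _ fun k _ => integrable_finsetSum _ fun l _ => hint i j k l]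
  refine Finset.sum_congr rfl fun k _ => ?_
  rw [integral_finsetSum _ fun l _ => hint i j k l]
  exact Finset.sum_congr rfl fun l _ => integral_const_mul _ _

lemma moment_swap_snd_fth (i k : Fin n) : moment σ i k k i = moment σ i i k k := by
  unfold moment quartic
  congr 1 with w
  ring

lemma moment_diag_comm (i k : Fin n) : moment σ i i k k = moment σ k k i i := by
  unfold moment quartic
  congr 1 with w
  ring

lemma integral_comp_eq_of_map_eq {f : EuclideanSpace ℂ (Fin n) → ℂ} (hf : Continuous f)
    {U : EuclideanSpace ℂ (Fin n) ≃ₗᵢ[ℂ] EuclideanSpace ℂ (Fin n)}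
    (hU : σ.map U = σ) :
    ∫ w, f (U w) ∂σ = ∫ w, f w ∂σ := by
  rw [← integral_map U.continuous.aemeasurable (hU ▸ hf.aestronglyMeasurable), hU]

lemma moment_eq_mul_moment (hinv : UnitarilyInvariant σ) (c : Fin n → unitary ℂ)
    (i j k l : Fin n) :
    moment σ i j k l = c i * conj (c j : ℂ) * (c k * conj (c l : ℂ)) * moment σ i j k l := by
  rw [moment, ← integral_const_mul, ← integral_comp_eq_of_map_eq (continuous_quartic i j k l)
    (hinv (diagonalUnitary c))]
  congr 1 with w
  simp only [quartic, diagonalUnitary_apply, map_mul]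
  ring

noncomputable def phaseAt (m : Fin n) (t : Fin n) : unitary ℂ :=
  if t = m then ⟨Complex.I, by simp [Unitary.mem_iff, Complex.conj_I]⟩ else 1

lemma exists_phase_ne_one {i j k l : Fin n} (h : ¬((i = j ∧ k = l) ∨ (i = l ∧ k = j))) :
    ∃ m, (phaseAt m i * conj (phaseAt m j : ℂ) *
      (phaseAt m k * conj (phaseAt m l : ℂ)) : ℂ) ≠ 1 := by
  by_cases hi : i = j ∨ i = l
  · refine ⟨k, ?_⟩
    rcases hi with rfl | rfl <;>
    · by_cases hik : i = k <;> simp_all [phaseAt, Complex.ext_iff, eq_comm]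
  · obtain ⟨hj, hl⟩ : j ≠ i ∧ l ≠ i := by tauto
    refine ⟨i, ?_⟩
    by_cases hk : k = i <;> norm_num [phaseAt, hj, hl, hk, Complex.ext_iff]

lemma moment_eq_zero (hinv : UnitarilyInvariant σ) {i j k l : Fin n}
    (h : ¬((i = j ∧ k = l) ∨ (i = l ∧ k = j))) :
    moment σ i j k l = 0 := by
  obtain ⟨m, hm⟩ := exists_phase_ne_one h
  have := moment_eq_mul_moment hinv (phaseAt m) i j k l
  exact (mul_left_eq_self₀.1 this.symm).resolve_left hm

lemma moment_hadamard [IsProbabilityMeasure σ] (hsphere : σ (Metric.sphere 0 1) = 1)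
    (hinv : UnitarilyInvariant σ) {a b : Fin n} (hab : a ≠ b) :
    4 * moment σ a a a a = moment σ a a a a + moment σ b b b b + 4 * moment σ a a b b := by
  set s : ℂ := ((√2 : ℝ) : ℂ)⁻¹
  have hs : s * s = 1 / 2 := by
    rw [← mul_inv, ← Complex.ofReal_mul, Real.mul_self_sqrt zero_le_two]
    norm_num
  have hpt : ∀ w, quartic a a a a (hadamard hab w) = ∑ i ∈ {a, b}, ∑ j ∈ {a, b},
      ∑ k ∈ {a, b}, ∑ l ∈ {a, b}, 1 / 4 * quartic i j k l w := by
    intro w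
    calc quartic a a a a (hadamard hab w)
        = s * s * (s * s) *
            ((w a + w b) * conj (w a + w b) * ((w a + w b) * conj (w a + w b))) := by
          simp only [quartic, hadamard_apply_left, map_mul, map_inv₀, Complex.conj_ofReal, s]
          ring
      _ = _ := by
          simp only [hs, Finset.sum_pair hab, quartic, map_add]
          ring
  have h : ∫ w, quartic a a a a (hadamard hab w) ∂σ = moment σ a a a a :=
    integral_comp_eq_of_map_eq (continuous_quartic a a a a) (hinv (hadamard hab))
  rw [integral_congr_ae (ae_of_all _ hpt), integral_sum_quartic hsphere] at h
  simp (disch := simp [hab, hab.symm]) only [Finset.sum_pair hab, moment_eq_zero hinv] at h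
  rw [moment_swap_snd_fth a b, moment_swap_snd_fth b a, moment_diag_comm b a] at h
  linear_combination (-4) * h

lemma moment_self_eq [IsProbabilityMeasure σ] (hsphere : σ (Metric.sphere 0 1) = 1)
    (hinv : UnitarilyInvariant σ) (a b : Fin n) : moment σ a a a a = moment σ b b b b := by
  rcases eq_or_ne a b with rfl | hab
  · rfl
  have hrot_ab := moment_hadamard hsphere hinv hab
  have hrot_ba := moment_hadamard hsphere hinv hab.symm
  rw [moment_diag_comm b a] at hrot_ba
  linear_combination (hrot_ab - hrot_ba) / 4

lemma moment_self_eq_two_mul [IsProbabilityMeasure σ] (hsphere : σ (Metric.sphere 0 1) = 1)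
    (hinv : UnitarilyInvariant σ) {a b : Fin n} (hab : a ≠ b) :
    moment σ a a a a = 2 * moment σ a a b b := by
  linear_combination (moment_hadamard hsphere hinv hab - moment_self_eq hsphere hinv a b) / 2

lemma sum_moment_diag_diag [IsProbabilityMeasure σ] (hsphere : σ (Metric.sphere 0 1) = 1) :
    ∑ i, ∑ k, moment σ i i k k = 1 := by
  have hone : ∀ᵐ w ∂σ, ∑ i, ∑ k, quartic i i k k w = 1 := by
    filter_upwards [ae_norm_eq_one hsphere] with w hw
    have hsq : ∑ i, w i * conj (w i) = 1 := by
      have := inner_self_eq_norm_sq_to_K (𝕜 := ℂ) w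
      rw [PiLp.inner_apply, hw] at this
      simpa [Complex.mul_conj'] using this
    simp only [quartic, ← Finset.sum_mul_sum, hsq, one_mul]
  calc ∑ i, ∑ k, moment σ i i k k = ∫ w, ∑ i, ∑ k, quartic i i k k w ∂σ := by
        rw [integral_finsetSum _ fun i _ => integrable_finsetSum _ fun k _ =>
          integrable_quartic hsphere i i k k]
        exact Finset.sum_congr rfl fun i _ =>
          (integral_finsetSum _ fun k _ => integrable_quartic hsphere i i k k).symm
    _ = 1 := by simp [integral_congr_ae hone]

lemma moment_self [IsProbabilityMeasure σ] (hsphere : σ (Metric.sphere 0 1) = 1)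
    (hinv : UnitarilyInvariant σ) (a : Fin n) : moment σ a a a a = 2 / (n * (n + 1)) := by
  have hdiag : ∀ i k : Fin n,
      moment σ i i k k = moment σ a a a a / 2 * (1 + if i = k then 1 else 0) := by
    intro i k
    rcases eq_or_ne i k with rfl | hik
    · rw [moment_self_eq hsphere hinv i a, if_pos rfl]
      ring
    · rw [moment_self_eq hsphere hinv a i, moment_self_eq_two_mul hsphere hinv hik, if_neg hik]
      ring
  have h := sum_moment_diag_diag hsphere
  rw [Finset.sum_congr rfl fun i _ => Finset.sum_congr rfl fun k _ => hdiag i k] at h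
  simp only [← Finset.mul_sum, Finset.sum_add_distrib, Finset.sum_ite_eq,
    Finset.mem_univ, if_true, Finset.sum_const, Finset.card_univ, Fintype.card_fin,
    nsmul_eq_mul, mul_one] at h
  replace h : moment σ a a a a / 2 * (n * (n + 1)) = 1 := by linear_combination h
  rw [eq_div_iff (right_ne_zero_of_mul_eq_one h)]
  linear_combination 2 * h

lemma moment_diag_diag [IsProbabilityMeasure σ] (hsphere : σ (Metric.sphere 0 1) = 1)
    (hinv : UnitarilyInvariant σ) (i k : Fin n) :
    moment σ i i k k = (1 + if i = k then 1 else 0) / (n * (n + 1)) := by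
  rcases eq_or_ne i k with rfl | hik
  · rw [moment_self hsphere hinv, if_pos rfl]
    norm_num
  · have h := moment_self_eq_two_mul hsphere hinv hik
    rw [moment_self hsphere hinv] at h
    rw [if_neg hik, add_zero]
    linear_combination (-1 / 2) * h

lemma moment_eq [IsProbabilityMeasure σ] (hsphere : σ (Metric.sphere 0 1) = 1)
    (hinv : UnitarilyInvariant σ) (i j k l : Fin n) :
    moment σ i j k l =
      ((if i = j ∧ k = l then 1 else 0) + (if i = l ∧ k = j then 1 else 0)) /
        (n * (n + 1)) := by
  by_cases h : (i = j ∧ k = l) ∨ (i = l ∧ k = j)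
  · rcases h with ⟨rfl, rfl⟩ | ⟨rfl, rfl⟩
    · rw [moment_diag_diag hsphere hinv]
      by_cases hik : i = k <;> simp [hik]
    · rw [moment_swap_snd_fth, moment_diag_diag hsphere hinv]
      by_cases hik : i = k <;> simp [hik, eq_comm (a := k)]
  · rw [moment_eq_zero hinv h]
    simp only [not_or] at h
    simp [h]

lemma sum_mul_moment [IsProbabilityMeasure σ] (hsphere : σ (Metric.sphere 0 1) = 1)
    (hinv : UnitarilyInvariant σ) (C : Fin n → Fin n → Fin n → Fin n → ℂ) :
    ∑ i, ∑ j, ∑ k, ∑ l, C i j k l * moment σ i j k l =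
      1 / (n * (n + 1)) * ∑ i, ∑ k, (C i i k k + C i k k i) := by
  simp only [moment_eq hsphere hinv]
  simp [div_eq_inv_mul, mul_add, Finset.sum_add_distrib, ite_and, Finset.mul_sum,
    Finset.sum_ite_irrel, mul_comm]

end Moments

theorem stmt4_general (n : ℕ) (R : CurvatureForm n)
    (e : OrthonormalBasis (Fin n) ℂ (EuclideanSpace ℂ (Fin n)))
    (b : Fin n → ℝ)
    (σ : Measure (EuclideanSpace ℂ (Fin n))) [IsProbabilityMeasure σ]
    (hsphere : σ (Metric.sphere (0 : EuclideanSpace ℂ (Fin n)) 1) = 1)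
    (hinv : ∀ U : EuclideanSpace ℂ (Fin n) ≃ₗᵢ[ℂ] EuclideanSpace ℂ (Fin n),
      σ.map U = σ)
    (vb : EuclideanSpace ℂ (Fin n) → EuclideanSpace ℂ (Fin n))
    (hvb : ∀ w, vb w = ∑ i, ((b i : ℂ) * w i) • e i) :
    ∫ w, R.R (vb w) (vb w) (vb w) (vb w) ∂σ =
      (1 / ((n : ℂ) * ((n : ℂ) + 1))) *
        ∑ i, ∑ k, (R.R (e i) (e i) (e k) (e k) + R.R (e i) (e k) (e k) (e i)) *
          (b i : ℂ) ^ 2 * (b k : ℂ) ^ 2 := by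
  have hexpand : ∀ w, R.R (vb w) (vb w) (vb w) (vb w) = ∑ i, ∑ j, ∑ k, ∑ l,
      (b i * b j * b k * b l * R.R (e i) (e j) (e k) (e l) : ℂ) * quartic i j k l w := by
    intro w
    rw [hvb, R.apply_sum_smul]
    refine Finset.sum_congr rfl fun i _ => Finset.sum_congr rfl fun j _ =>
      Finset.sum_congr rfl fun k _ => Finset.sum_congr rfl fun l _ => ?_
    simp only [quartic, map_mul, Complex.conj_ofReal]
    ring
  rw [integral_congr_ae (ae_of_all _ hexpand), integral_sum_quartic hsphere,
    sum_mul_moment hsphere hinv]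
  congr 1
  refine Finset.sum_congr rfl fun i _ => Finset.sum_congr rfl fun k _ => ?_
  ring

/-- Averaging identity (equation (5) of the paper): the spherical average of the
holomorphic-sectional-curvature integrand equals
`(1/(n(n+1))) Σ (R(eᵢ,eᵢ,e_k,e_k) + R(eᵢ,e_k,e_k,eᵢ)) bᵢ² b_k²`. -/
theorem stmt4 (n : ℕ) (hn : 1 ≤ n) (R : CurvatureForm n)
    (e : OrthonormalBasis (Fin n) ℂ (EuclideanSpace ℂ (Fin n)))
    (b : Fin n → ℝ) (hb : ∀ i, 0 ≤ b i)
    (σ : Measure (EuclideanSpace ℂ (Fin n))) [IsProbabilityMeasure σ]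
    (hsphere : σ (Metric.sphere (0 : EuclideanSpace ℂ (Fin n)) 1) = 1)
    (hinv : ∀ U : EuclideanSpace ℂ (Fin n) ≃ₗᵢ[ℂ] EuclideanSpace ℂ (Fin n),
      σ.map U = σ)
    (vb : EuclideanSpace ℂ (Fin n) → EuclideanSpace ℂ (Fin n))
    (hvb : ∀ w, vb w = ∑ i, ((b i : ℂ) * w i) • e i) :
    ∫ w, R.R (vb w) (vb w) (vb w) (vb w) ∂σ =
      (1 / ((n : ℂ) * ((n : ℂ) + 1))) *
        ∑ i, ∑ k, (R.R (e i) (e i) (e k) (e k) + R.R (e i) (e k) (e k) (e i)) *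
          (b i : ℂ) ^ 2 * (b k : ℂ) ^ 2 :=
  stmt4_general n R e b σ hsphere hinv vb hvb
end

section
/- Let n ≥ 1 and let R : ℂⁿ × ℂⁿ × ℂⁿ × ℂⁿ → ℂ be a curvature-type form satisfying the Hermitian symmetry conj( R(X, Y, Z, W) ) = R(Y, X, W, Z) for all X, Y, Z, W ∈ ℂⁿ. Then the following are equivalent: (a) Re( R(v, v, v, v) ) < 0 for every nonzero vector v ∈ ℂⁿ; (b) for every orthonormal basis (e₁, …, eₙ) of ℂⁿ and every vector b ∈ ℝⁿ with b_i ≥ 0 for all i and b ≠ 0, one has Σ_{i,k=1}^{n} Re( R(e_i, e_i, e_k, e_k) + R(e_i, e_k, e_k, e_i) ) b_i b_k < 0. -/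
open scoped ComplexConjugate BigOperators

/-!
Negativity of the quadratic form comes from summing `R(v,v,v,v)` over the `4ⁿ` vectors
`v = ∑ⱼ √bⱼ ζⱼ eⱼ` with each `ζⱼ` a fourth root of unity. This discrete torus average replaces
the integral over the unit sphere: it kills every term `R(e_a,e_b,e_c,e_d)` except those with
`{a,c} = {b,d}`, so the sum is `4ⁿ (∑ᵢₖ (R_{iīkk̄} + R_{ik̄kī}) bᵢ b_k - ∑ᵢ R_{iīiī} bᵢ²)`, and the
subtracted diagonal part is itself negative. Conversely, taking `b` a coordinate vector in a
unitary frame containing `v / ‖v‖` gives `2 R(v,v,v,v) / ‖v‖⁴ < 0`.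
-/

theorem AddChar.map_sum_eq_prod {A M ι : Type*} [AddCommMonoid A] [CommMonoid M]
    (ψ : AddChar A M) (s : Finset ι) (f : ι → A) : ψ (∑ i ∈ s, f i) = ∏ i ∈ s, ψ (f i) :=
  map_prod ψ.toMonoidHom (fun i => Multiplicative.ofAdd (f i)) s

theorem Pi.single_sub_single_add_single_sub_single_eq_zero_iff {ι R : Type*} [DecidableEq ι]
    [Ring R] (h2 : (2 : R) ≠ 0) (a b c d : ι) :
    (Pi.single a 1 - Pi.single b 1 + Pi.single c 1 - Pi.single d 1 : ι → R) = 0 ↔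
      (a = b ∧ c = d) ∨ (a = d ∧ b = c) := by
  have h1 : (1 : R) ≠ 0 := fun h => h2 (by rw [← one_add_one_eq_two, h, add_zero])
  refine ⟨fun h => ?_, by rintro (⟨rfl, rfl⟩ | ⟨rfl, rfl⟩) <;> abel⟩
  by_cases hab : a = b
  · subst hab
    refine .inl ⟨rfl, by_contra fun hcd => ?_⟩
    simpa [Pi.single_apply, hcd, h1] using congrFun h c
  by_cases had : a = d
  · subst had
    refine .inr ⟨rfl, by_contra fun hbc => ?_⟩
    simpa [Pi.single_apply, Ne.symm hab, Ne.symm hbc, h1] using congrFun h b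
  -- the `a`-coordinate is now `1` or `2`
  · have ha := congrFun h a
    by_cases hca : c = a <;>
      simp [Ne.symm hab, Ne.symm had, hca, h1, h2, one_add_one_eq_two] at ha

theorem ZMod.sum_stdAddChar_mul_conj {ι : Type*} [Fintype ι] [DecidableEq ι] (a b c d : ι) :
    ∑ t : ι → ZMod 4, stdAddChar (t a) * conj (stdAddChar (t b)) *
        stdAddChar (t c) * conj (stdAddChar (t d)) =
      if (a = b ∧ c = d) ∨ (a = d ∧ b = c) then (4 : ℂ) ^ Fintype.card ι else 0 := by
  set m : ι → ZMod 4 := Pi.single a 1 - Pi.single b 1 + Pi.single c 1 - Pi.single d 1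
  have hterm (t : ι → ZMod 4) : stdAddChar (t a) * conj (stdAddChar (t b)) *
      stdAddChar (t c) * conj (stdAddChar (t d)) = ∏ j, stdAddChar (t j * m j) := by
    rw [← AddChar.map_sum_eq_prod, ← dotProduct, ← AddChar.map_neg_eq_conj,
      ← AddChar.map_neg_eq_conj, ← AddChar.map_add_eq_mul, ← AddChar.map_add_eq_mul,
      ← AddChar.map_add_eq_mul]
    simp only [m, dotProduct_sub, dotProduct_add, dotProduct_single_one]
    ring_nf
  rw [Finset.sum_congr rfl fun t _ => hterm t,
    ← Fintype.prod_sum fun j (s : ZMod 4) => stdAddChar (s * m j)]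
  simp only [AddChar.sum_mulShift _ (isPrimitive_stdAddChar 4), card, Nat.cast_ite,
    Nat.cast_ofNat, Nat.cast_zero]
  simp only [Fintype.prod_ite_zero, ← funext_iff, ← Pi.zero_def, m,
    Pi.single_sub_single_add_single_sub_single_eq_zero_iff (by decide : (2 : ZMod 4) ≠ 0),
    Finset.prod_const, Finset.card_univ]

theorem ite_or_eq_add_sub {M : Type*} [AddCommGroup M] (p q : Prop) [Decidable p] [Decidable q]
    (x : M) :
    (if p ∨ q then x else 0) = (if p then x else 0) + (if q then x else 0) -
      if p ∧ q then x else 0 := by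
  by_cases p <;> by_cases q <;> simp [*]

theorem Finset.sum_ite_pairing {ι M : Type*} [Fintype ι] [DecidableEq ι] [AddCommGroup M]
    (f : ι → ι → ι → ι → M) :
    ∑ a, ∑ b, ∑ c, ∑ d, (if (a = b ∧ c = d) ∨ (a = d ∧ b = c) then f a b c d else 0) =
      ∑ i, ∑ k, (f i i k k + f i k k i) - ∑ i, f i i i i := by
  simp only [ite_or_eq_add_sub, Finset.sum_add_distrib, Finset.sum_sub_distrib]
  simp [ite_and, Finset.sum_ite_eq]

theorem OrthonormalBasis.exists_apply_eq {𝕜 E ι : Type*} [RCLike 𝕜] [NormedAddCommGroup E]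
    [InnerProductSpace 𝕜 E] [FiniteDimensional 𝕜 E] [Fintype ι]
    (hcard : Module.finrank 𝕜 E = Fintype.card ι) {u : E} (hu : ‖u‖ = 1) (i : ι) :
    ∃ b : OrthonormalBasis ι 𝕜 E, b i = u := by
  obtain ⟨b, hb⟩ := Orthonormal.exists_orthonormalBasis_extension_of_card_eq hcard
    (v := fun _ => u) (s := {i}) (orthonormal_subsingleton_iff.mpr fun _ => hu)
  exact ⟨b, hb i rfl⟩

noncomputable def phaseCombination {ι M : Type*} [Fintype ι] [AddCommMonoid M] [Module ℂ M]
    (c : ι → ℝ) (e : ι → M) (t : ι → ZMod 4) : M :=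
  ∑ j, ((c j : ℂ) * ZMod.stdAddChar (t j)) • e j

theorem phaseCombination_ne_zero {ι M : Type*} [Fintype ι] [AddCommGroup M] [Module ℂ M]
    {c : ι → ℝ} {e : ι → M} (he : LinearIndependent ℂ e) (hc : c ≠ 0) (t : ι → ZMod 4) :
    phaseCombination c e t ≠ 0 := by
  obtain ⟨i, hi⟩ := Function.ne_iff.mp hc
  intro h
  exact mul_ne_zero (Complex.ofReal_ne_zero.mpr hi) (AddChar.val_isUnit _ _).ne_zero
    (Fintype.linearIndependent_iff.mp he _ h i)

namespace CurvatureForm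

variable {n : ℕ} (R : CurvatureForm n) {ι : Type*}

theorem sum_fst (s : Finset ι) (f : ι → EuclideanSpace ℂ (Fin n)) (Y Z W) :
    R.R (∑ j ∈ s, f j) Y Z W = ∑ j ∈ s, R.R (f j) Y Z W :=
  map_sum (AddMonoidHom.mk' (R.R · Y Z W) fun X X' => R.add_fst X X' Y Z W) f s

theorem sum_snd (s : Finset ι) (X) (f : ι → EuclideanSpace ℂ (Fin n)) (Z W) :
    R.R X (∑ j ∈ s, f j) Z W = ∑ j ∈ s, R.R X (f j) Z W :=
  map_sum (AddMonoidHom.mk' (R.R X · Z W) fun Y Y' => R.add_snd X Y Y' Z W) f s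

theorem sum_trd (s : Finset ι) (X Y) (f : ι → EuclideanSpace ℂ (Fin n)) (W) :
    R.R X Y (∑ j ∈ s, f j) W = ∑ j ∈ s, R.R X Y (f j) W :=
  map_sum (AddMonoidHom.mk' (R.R X Y · W) fun Z Z' => R.add_trd X Y Z Z' W) f s

theorem sum_fth (s : Finset ι) (X Y Z) (f : ι → EuclideanSpace ℂ (Fin n)) :
    R.R X Y Z (∑ j ∈ s, f j) = ∑ j ∈ s, R.R X Y Z (f j) :=
  map_sum (AddMonoidHom.mk' (R.R X Y Z ·) fun W W' => R.add_fth X Y Z W W') f s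

theorem apply_sum_smul_s5 [Fintype ι] (c : ι → ℂ) (e : ι → EuclideanSpace ℂ (Fin n)) :
    R.R (∑ j, c j • e j) (∑ j, c j • e j) (∑ j, c j • e j) (∑ j, c j • e j) =
      ∑ a, ∑ b, ∑ c', ∑ d,
        c a * conj (c b) * c c' * conj (c d) * R.R (e a) (e b) (e c') (e d) := by
  simp only [sum_fst, smul_fst]
  simp only [sum_snd, smul_snd, Finset.mul_sum]
  simp only [sum_trd, smul_trd, Finset.mul_sum]
  simp only [sum_fth, smul_fth, Finset.mul_sum, mul_assoc]

theorem apply_smul_self (c : ℂ) (v : EuclideanSpace ℂ (Fin n)) :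
    R.R (c • v) (c • v) (c • v) (c • v) = ((‖c‖ ^ 4 : ℝ) : ℂ) * R.R v v v v := by
  rw [R.smul_fst, R.smul_snd, R.smul_trd, R.smul_fth]
  push_cast
  linear_combination (c * conj c + (‖c‖ : ℂ) ^ 2) * R.R v v v v * Complex.mul_conj' c

theorem sum_apply_phaseCombination [Fintype ι] [DecidableEq ι] (c : ι → ℝ)
    (e : ι → EuclideanSpace ℂ (Fin n)) :
    ∑ t, R.R (phaseCombination c e t) (phaseCombination c e t) (phaseCombination c e t)
        (phaseCombination c e t) =
      ((4 ^ Fintype.card ι : ℝ) : ℂ) *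
        (∑ i, ∑ k, (R.R (e i) (e i) (e k) (e k) + R.R (e i) (e k) (e k) (e i)) *
            ((c i ^ 2 * c k ^ 2 : ℝ) : ℂ) -
          ∑ i, R.R (e i) (e i) (e i) (e i) * ((c i ^ 2 * c i ^ 2 : ℝ) : ℂ)) := by
  simp only [phaseCombination, R.apply_sum_smul_s5, map_mul, Complex.conj_ofReal]
  simp_rw [Finset.sum_comm (s := (Finset.univ : Finset (ι → ZMod 4)))]
  have hsplit (a b c' d : ι) (t : ι → ZMod 4) :
      (c a : ℂ) * ZMod.stdAddChar (t a) * ((c b : ℂ) * conj (ZMod.stdAddChar (t b))) *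
          ((c c' : ℂ) * ZMod.stdAddChar (t c')) * ((c d : ℂ) * conj (ZMod.stdAddChar (t d))) *
          R.R (e a) (e b) (e c') (e d) =
        (c a * c b * c c' * c d * R.R (e a) (e b) (e c') (e d)) *
          (ZMod.stdAddChar (t a) * conj (ZMod.stdAddChar (t b)) * ZMod.stdAddChar (t c') *
            conj (ZMod.stdAddChar (t d))) := by
    ring
  simp only [hsplit, ← Finset.mul_sum, ZMod.sum_stdAddChar_mul_conj, mul_ite, mul_zero]
  rw [Finset.sum_ite_pairing, mul_sub, Finset.mul_sum, Finset.mul_sum]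
  congr 1
  · refine Finset.sum_congr rfl fun i _ => ?_
    rw [Finset.mul_sum]
    refine Finset.sum_congr rfl fun k _ => ?_
    push_cast
    ring
  · refine Finset.sum_congr rfl fun i _ => ?_
    push_cast
    ring

theorem sum_re_mul_mul_lt_zero [Fintype ι] [DecidableEq ι]
    (hneg : ∀ v : EuclideanSpace ℂ (Fin n), v ≠ 0 → (R.R v v v v).re < 0)
    {e : ι → EuclideanSpace ℂ (Fin n)} (he : LinearIndependent ℂ e) {b : ι → ℝ}
    (hb0 : ∀ i, 0 ≤ b i) (hb : b ≠ 0) :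
    ∑ i, ∑ k, (R.R (e i) (e i) (e k) (e k) + R.R (e i) (e k) (e k) (e i)).re * b i * b k < 0 := by
  set c : ι → ℝ := fun i => √(b i)
  have hcb (i : ι) : c i ^ 2 = b i := Real.sq_sqrt (hb0 i)
  have hc : c ≠ 0 := fun h => hb (funext fun i => by rw [← hcb i, h, Pi.zero_apply, sq, mul_zero])
  have hsum : ∑ t, (R.R (phaseCombination c e t) (phaseCombination c e t)
      (phaseCombination c e t) (phaseCombination c e t)).re < 0 :=
    Finset.sum_neg (fun t _ => hneg _ (phaseCombination_ne_zero he hc t)) Finset.univ_nonempty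
  have hdiag : ∑ i, (R.R (e i) (e i) (e i) (e i)).re * (b i * b i) ≤ 0 :=
    Finset.sum_nonpos fun i _ => mul_nonpos_of_nonpos_of_nonneg (hneg _ (he.ne_zero i)).le
      (mul_self_nonneg _)
  have havg := congrArg Complex.re (R.sum_apply_phaseCombination c e)
  simp only [Complex.re_sum, Complex.re_ofReal_mul, Complex.re_mul_ofReal, Complex.sub_re, hcb]
    at havg
  have hgap := neg_of_mul_neg_right (havg ▸ hsum) (by positivity)
  simp only [mul_assoc] at hgap ⊢
  linarith

theorem re_apply_self_lt_zero
    (H : ∀ (e : OrthonormalBasis (Fin n) ℂ (EuclideanSpace ℂ (Fin n))) i,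
      (R.R (e i) (e i) (e i) (e i)).re < 0)
    {v : EuclideanSpace ℂ (Fin n)} (hv : v ≠ 0) : (R.R v v v v).re < 0 := by
  obtain ⟨i, -⟩ : ∃ i, v i ≠ 0 := by
    by_contra! h
    exact hv (PiLp.ext h)
  set u := ((‖v‖⁻¹ : ℝ) : ℂ) • v
  have hu : ‖u‖ = 1 := by simp [u, norm_smul, hv]
  obtain ⟨e, he⟩ := OrthonormalBasis.exists_apply_eq (𝕜 := ℂ) (by simp) hu i
  have hvu : v = ((‖v‖ : ℝ) : ℂ) • u := by
    rw [smul_smul, ← Complex.ofReal_mul, mul_inv_cancel₀ (norm_ne_zero_iff.mpr hv),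
      Complex.ofReal_one, one_smul]
  rw [hvu, apply_smul_self, Complex.re_ofReal_mul, Complex.norm_real, norm_norm, ← he]
  exact mul_neg_of_pos_of_neg (pow_pos (norm_pos_iff.mpr hv) 4) (H e i)

end CurvatureForm

theorem stmt5_general (n : ℕ) (R : CurvatureForm n) :
    (∀ v : EuclideanSpace ℂ (Fin n), v ≠ 0 → (R.R v v v v).re < 0) ↔
      (∀ (e : OrthonormalBasis (Fin n) ℂ (EuclideanSpace ℂ (Fin n))) (b : Fin n → ℝ),
        (∀ i, 0 ≤ b i) → b ≠ 0 →
          ∑ i, ∑ k,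
            (R.R (e i) (e i) (e k) (e k) + R.R (e i) (e k) (e k) (e i)).re *
              b i * b k < 0) := by
  refine ⟨fun hneg e b hb0 hb =>
      R.sum_re_mul_mul_lt_zero hneg e.orthonormal.linearIndependent hb0 hb,
    fun H v hv => R.re_apply_self_lt_zero (fun e i => ?_) hv⟩
  have h := H e (Pi.single i 1) (Pi.single_nonneg.mpr zero_le_one : (0 : Fin n → ℝ) ≤ _)
    (Pi.single_ne_zero_iff.mpr one_ne_zero)
  simp only [Pi.single_apply, mul_ite, mul_one, mul_zero, Finset.sum_ite_eq', Finset.mem_univ,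
    if_true, Complex.add_re] at h
  linarith

/-- Characterization of `HSC < 0` (paper, §2): under the Hermitian symmetry
`conj (R X Y Z W) = R Y X W Z`, negativity of `R(v,v,v,v)` on nonzero vectors is
equivalent to negativity of the quadratic form
`Σ Re(R(eᵢ,eᵢ,e_k,e_k) + R(eᵢ,e_k,e_k,eᵢ)) bᵢ b_k` on nonzero nonnegative vectors,
in every unitary frame. -/
theorem stmt5 (n : ℕ) (hn : 1 ≤ n) (R : CurvatureForm n)
    (hsym : ∀ X Y Z W, conj (R.R X Y Z W) = R.R Y X W Z) :
    (∀ v : EuclideanSpace ℂ (Fin n), v ≠ 0 → (R.R v v v v).re < 0) ↔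
      (∀ (e : OrthonormalBasis (Fin n) ℂ (EuclideanSpace ℂ (Fin n))) (b : Fin n → ℝ),
        (∀ i, 0 ≤ b i) → b ≠ 0 →
          ∑ i, ∑ k,
            (R.R (e i) (e i) (e k) (e k) + R.R (e i) (e k) (e k) (e i)).re *
              b i * b k < 0) :=
  stmt5_general n R
end

section
/- Let n ≥ 1 and let R : ℂⁿ × ℂⁿ × ℂⁿ × ℂⁿ → ℂ be a curvature-type form satisfying the Hermitian symmetry conj( R(X, Y, Z, W) ) = R(Y, X, W, Z) for all X, Y, Z, W ∈ ℂⁿ. Then the following are equivalent: (a) R(v, v, v, v) = 0 for every vector v ∈ ℂⁿ; (b) for every orthonormal basis (e₁, …, eₙ) of ℂⁿ and every vector b ∈ ℝⁿ with b_i ≥ 0 for all i, one has Σ_{i,k=1}^{n} Re( R(e_i, e_i, e_k, e_k) + R(e_i, e_k, e_k, e_i) ) b_i b_k = 0. -/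
/-!
Polarizing `R(v,v,v,v) = 0` at `u ± w` and `u ± i w` shows that the mixed sum
`R(w,w,u,u) + R(w,u,u,w) + R(u,w,w,u) + R(u,u,w,w)` vanishes; its real part at `(eᵢ, e_k)` is the
symmetrization of the coefficient of `bᵢ b_k`, so the quadratic form vanishes identically.
Conversely, every unit vector `u` belongs to some unitary frame, and testing the quadratic form
on the corresponding coordinate vector gives `2 Re R(u,u,u,u) = 0`; the Hermitian symmetry
makes `R(u,u,u,u)` real, and homogeneity passes from unit vectors to all vectors.
-/

open scoped ComplexConjugate BigOperators

open Module

theorem sum_sum_mul_mul_eq_zero_of_antisymm {R ι : Type*} [CommRing R] [NoZeroDivisors R]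
    [CharZero R] [Fintype ι] {a : ι → ι → R} (ha : ∀ i k, a i k + a k i = 0) (b : ι → R) :
    ∑ i, ∑ k, a i k * b i * b k = 0 := by
  have hswap : ∑ i, ∑ k, a i k * b i * b k = ∑ i, ∑ k, a k i * b i * b k := by
    rw [Finset.sum_comm]
    exact Finset.sum_congr rfl fun i _ => Finset.sum_congr rfl fun k _ => by ring
  have hdouble : ∑ i, ∑ k, a i k * b i * b k + ∑ i, ∑ k, a i k * b i * b k = 0 := by
    conv_lhs => enter [2]; rw [hswap]
    simp only [← Finset.sum_add_distrib, ← add_mul, ha, zero_mul, Finset.sum_const_zero]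
  rwa [← two_mul, mul_eq_zero, or_iff_right two_ne_zero] at hdouble

theorem exists_orthonormalBasis_apply_eq {𝕜 E ι : Type*} [RCLike 𝕜] [NormedAddCommGroup E]
    [InnerProductSpace 𝕜 E] [FiniteDimensional 𝕜 E] [Fintype ι]
    (hcard : finrank 𝕜 E = Fintype.card ι) {u : E} (hu : ‖u‖ = 1) :
    ∃ (b : OrthonormalBasis ι 𝕜 E) (i : ι), b i = u := by
  have : Nontrivial E := ⟨u, 0, by rintro rfl; simp at hu⟩
  obtain ⟨i⟩ : Nonempty ι := Fintype.card_pos_iff.mp (hcard ▸ finrank_pos)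
  have hsingle : Orthonormal 𝕜 (({i} : Set ι).domRestrict fun _ => u) :=
    orthonormal_subsingleton_iff.mpr fun _ => hu
  obtain ⟨b, hb⟩ := hsingle.exists_orthonormalBasis_extension_of_card_eq hcard
  exact ⟨b, i, hb i rfl⟩

namespace CurvatureForm

variable {n : ℕ} (R : CurvatureForm n)

theorem diag_smul (c : ℂ) (v : EuclideanSpace ℂ (Fin n)) :
    R.R (c • v) (c • v) (c • v) (c • v) = (c * conj c) ^ 2 * R.R v v v v := by
  simp only [R.smul_fst, R.smul_snd, R.smul_trd, R.smul_fth]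
  ring

theorem diag_eq_zero_of_norm_eq_one
    (h : ∀ u : EuclideanSpace ℂ (Fin n), ‖u‖ = 1 → R.R u u u u = 0)
    (v : EuclideanSpace ℂ (Fin n)) : R.R v v v v = 0 := by
  rcases eq_or_ne v 0 with rfl | hv
  · simpa using R.diag_smul 0 0
  · have hv' : v = (‖v‖ : ℂ) • ((‖v‖ : ℂ)⁻¹ • v) := by
      rw [smul_smul, mul_inv_cancel₀ (by simpa using hv), one_smul]
    have hunit : ‖(‖v‖ : ℂ)⁻¹ • v‖ = 1 := by exact_mod_cast norm_smul_inv_norm (𝕜 := ℂ) hv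
    rw [hv', R.diag_smul, h _ hunit, mul_zero]

section diag_eq_zero

variable {R} (h0 : ∀ v : EuclideanSpace ℂ (Fin n), R.R v v v v = 0)
include h0

-- Averaging the expansions at `u + w` and `u - w` cancels the terms of odd degree in `w`.
theorem degree_two_two_eq_zero (u w : EuclideanSpace ℂ (Fin n)) :
    R.R w u w u + R.R u w u w +
      (R.R w w u u + R.R w u u w + R.R u w w u + R.R u u w w) = 0 := by
  have hadd := h0 (u + w)
  have hsub := h0 (u + (-1 : ℂ) • w)
  simp only [R.add_fst, R.add_snd, R.add_trd, R.add_fth, R.smul_fst, R.smul_snd, R.smul_trd,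
    R.smul_fth, map_neg, map_one] at hadd hsub
  linear_combination (hadd + hsub) / 2 - h0 u - h0 w

-- Replacing `w` by `i • w` negates `R(w,u,w,u) + R(u,w,u,w)` and fixes the remaining terms.
theorem mixed_eq_zero (u w : EuclideanSpace ℂ (Fin n)) :
    R.R w w u u + R.R w u u w + R.R u w w u + R.R u u w w = 0 := by
  have h1 := degree_two_two_eq_zero h0 u w
  have hI := degree_two_two_eq_zero h0 u (Complex.I • w)
  simp only [R.smul_fst, R.smul_snd, R.smul_trd, R.smul_fth, Complex.conj_I] at hI
  linear_combination (h1 + hI) / 2 +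
    ((R.R w w u u + R.R w u u w + R.R u w w u + R.R u u w w -
      (R.R w u w u + R.R u w u w)) / 2) * Complex.I_mul_I

end diag_eq_zero

end CurvatureForm

theorem stmt6_general (n : ℕ) (R : CurvatureForm n)
    (hsym : ∀ X Y Z W, conj (R.R X Y Z W) = R.R Y X W Z) :
    (∀ v : EuclideanSpace ℂ (Fin n), R.R v v v v = 0) ↔
      (∀ (e : OrthonormalBasis (Fin n) ℂ (EuclideanSpace ℂ (Fin n))) (b : Fin n → ℝ),
        (∀ i, 0 ≤ b i) →
          ∑ i, ∑ k,
            (R.R (e i) (e i) (e k) (e k) + R.R (e i) (e k) (e k) (e i)).re *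
              b i * b k = 0) := by
  constructor
  · intro h0 e b _
    refine sum_sum_mul_mul_eq_zero_of_antisymm (fun i k => ?_) b
    have hmixed := congrArg Complex.re (R.mixed_eq_zero h0 (e i) (e k))
    simp only [Complex.add_re, Complex.zero_re] at hmixed ⊢
    linarith
  · intro h
    refine R.diag_eq_zero_of_norm_eq_one fun u hu => ?_
    obtain ⟨e, i, rfl⟩ := exists_orthonormalBasis_apply_eq (finrank_euclideanSpace (𝕜 := ℂ)) hu
    have hre := h e (Pi.single i 1) fun k => by rw [Pi.single_apply]; split_ifs <;> norm_num
    simp only [Pi.single_apply, mul_ite, mul_one, mul_zero, Finset.sum_ite_eq',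
      Finset.mem_univ, if_true, Complex.add_re] at hre
    have him := Complex.conj_eq_iff_im.mp (hsym (e i) (e i) (e i) (e i))
    exact Complex.ext (by simpa using hre) him

/-- Characterization of `HSC = 0` (paper, §2): under the Hermitian symmetry
`conj (R X Y Z W) = R Y X W Z`, vanishing of `R(v,v,v,v)` for every vector is
equivalent to vanishing of the quadratic form
`Σ Re(R(eᵢ,eᵢ,e_k,e_k) + R(eᵢ,e_k,e_k,eᵢ)) bᵢ b_k` on nonnegative vectors,
in every unitary frame. -/
theorem stmt6 (n : ℕ) (hn : 1 ≤ n) (R : CurvatureForm n)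
    (hsym : ∀ X Y Z W, conj (R.R X Y Z W) = R.R Y X W Z) :
    (∀ v : EuclideanSpace ℂ (Fin n), R.R v v v v = 0) ↔
      (∀ (e : OrthonormalBasis (Fin n) ℂ (EuclideanSpace ℂ (Fin n))) (b : Fin n → ℝ),
        (∀ i, 0 ≤ b i) →
          ∑ i, ∑ k,
            (R.R (e i) (e i) (e k) (e k) + R.R (e i) (e k) (e k) (e i)).re *
              b i * b k = 0) :=
  stmt6_general n R hsym
end

section
/- Let n ≥ 1, let A be a real n × n matrix, let κ ≥ 0 be a real number, and let r be a natural number with 1 ≤ r ≤ n. Suppose that for every vector v ∈ ℝⁿ with nonnegative entries one has Σ_{i,k=1}^{n} A_{ik} v_i v_k ≤ −κ · Σ_{i=1}^{n} v_i². Then for every vector λ ∈ ℝⁿ having at most r nonzero entries, Σ_{i,k=1}^{n} A_{ik} λ_i² λ_k² ≤ −(κ/r) · ( Σ_{i=1}^{n} λ_i² )². -/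
open scoped BigOperators

/-- Key algebraic estimate in the proof of the Hermitian Chern–Lu inequality
(Theorem 1.1): if the quadratic form of `A` on the nonnegative orthant is bounded above
by `-κ` times the squared norm, then for every vector `l` with at most `r` nonzero
entries, `Σ A_{ik} lᵢ² l_k² ≤ -(κ/r) (Σ lᵢ²)²`. -/
theorem stmt8 (n : ℕ) (hn : 1 ≤ n) (A : Matrix (Fin n) (Fin n) ℝ)
    (κ : ℝ) (hκ : 0 ≤ κ) (r : ℕ) (hr1 : 1 ≤ r) (hrn : r ≤ n)
    (hA : ∀ v : Fin n → ℝ, (∀ i, 0 ≤ v i) →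
      ∑ i, ∑ k, A i k * v i * v k ≤ -κ * ∑ i, v i ^ 2) :
    ∀ l : Fin n → ℝ, (Finset.univ.filter fun i => l i ≠ 0).card ≤ r →
      ∑ i, ∑ k, A i k * l i ^ 2 * l k ^ 2 ≤ -(κ / r) * (∑ i, l i ^ 2) ^ 2 := by
  intro l hl
  have h1 := hA (fun i => l i ^ 2) (fun i => sq_nonneg _)
  have key : (∑ i, l i ^ 2) ^ 2 ≤ r * ∑ i, (l i ^ 2) ^ 2 := by
    set s := Finset.univ.filter fun i => l i ≠ 0 with hs
    have e1 : ∑ i, l i ^ 2 = ∑ i ∈ s, l i ^ 2 := by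
      refine (Finset.sum_subset (Finset.subset_univ s) ?_).symm
      intro x _ hx
      simp [hs] at hx
      simp [hx]
    have e2 : ∑ i, (l i ^ 2) ^ 2 = ∑ i ∈ s, (l i ^ 2) ^ 2 := by
      refine (Finset.sum_subset (Finset.subset_univ s) ?_).symm
      intro x _ hx
      simp [hs] at hx
      simp [hx]
    rw [e1, e2]
    calc (∑ i ∈ s, l i ^ 2) ^ 2 ≤ s.card * ∑ i ∈ s, (l i ^ 2) ^ 2 :=
          sq_sum_le_card_mul_sum_sq
      _ ≤ r * ∑ i ∈ s, (l i ^ 2) ^ 2 := by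
          apply mul_le_mul_of_nonneg_right _ (Finset.sum_nonneg fun i _ => sq_nonneg _)
          exact_mod_cast hl
  have hr0 : (0 : ℝ) < r := by exact_mod_cast hr1
  calc ∑ i, ∑ k, A i k * l i ^ 2 * l k ^ 2 ≤ -κ * ∑ i, (l i ^ 2) ^ 2 := h1
    _ ≤ -(κ / r) * (∑ i, l i ^ 2) ^ 2 := by
        rw [neg_mul, neg_mul, neg_le_neg_iff, div_mul_eq_mul_div, div_le_iff₀ hr0]
        calc κ * (∑ i, l i ^ 2) ^ 2 ≤ κ * (r * ∑ i, (l i ^ 2) ^ 2) :=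
              mul_le_mul_of_nonneg_left key hκ
          _ = κ * (∑ i, (l i ^ 2) ^ 2) * r := by ring
end
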